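/- Let (X, ‖·‖) be a normal ordered normed space (i.e., semimonotone: there is M with 0 ≤ y ≤ x implying ‖y‖ ≤ M‖x‖). Then its nonstandard hull X̂ = fin(*X)/μ(*X), with the induced order ([κ] ≥ 0 iff κ ≈ ξ for some ξ ≥ 0 in *X) and norm ‖[x]‖ = st‖x‖, is a normal ordered Banach space with the same semimonotonicity constant M. -/

import Mathlib

open Filter

/-- The nonstandard extension `*Z` realized as the ultrapower `Germ (hyperfilter ℕ) Z`. -/
notation "γ*" Z => Germ ((hyperfilter ℕ : Ultrafilter ℕ) : Filter ℕ) Z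

/-!
Along an ultrafilter `φ`, the standard part of a finite hyperreal `[u]` is the limit of `u` along
`φ`, and `[f]` is infinitesimal iff `f → 0` along `φ`. Normality of the hull is then the internal
inequality `‖ξ'‖ ≤ M ‖ξ' + δ‖` (for `0 ≤ ξ' ≤ ξ' + δ`) passed to the limit, since `ξ' ≈ ξ` and
`ξ' + δ ≈ κ`. Completeness is countable saturation of the ultrapower over `ℕ`: a countable family
of pointwise conditions each of whose finite subfamilies is eventually satisfiable is eventually
satisfiable by a single sequence, obtained by a diagonal choice. Applied to the conditions
`‖κ (N j) - l‖ ≤ 1 / (j + 1)` for a Cauchy sequence `κ`, this produces the limit `l`.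
-/

open Topology

namespace Filter.Germ

variable {α β E : Type*} {l : Filter α} [SeminormedAddCommGroup E]

theorem exists_coe_eq (g : Germ l β) : ∃ f : α → β, ↑f = g :=
  g.inductionOn fun f => ⟨f, rfl⟩

theorem tendsto_nhds_zero_iff_forall_map_norm_le (f : α → E) :
    Tendsto f l (𝓝 0) ↔ ∀ ε : ℝ, 0 < ε → map (‖·‖) (f : Germ l E) ≤ ↑ε := by
  simp only [Metric.nhds_basis_closedBall.tendsto_right_iff, mem_closedBall_zero_iff]
  rfl

theorem tendsto_nhds_iff_forall_abs_sub_le {φ : Ultrafilter α} (u : α → ℝ) (s : ℝ) :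
    Tendsto u φ (𝓝 s) ↔ ∀ ε : ℝ, 0 < ε → |(u : Germ (φ : Filter α) ℝ) - ↑s| ≤ ↑ε :=
  Metric.nhds_basis_closedBall.tendsto_right_iff

end Filter.Germ

section Limits

variable {α E : Type*} {l : Filter α} [SeminormedAddCommGroup E]

theorem tendsto_norm_of_tendsto_sub_nhds_zero {f g : α → E} {s : ℝ}
    (hgf : Tendsto (g - f) l (𝓝 0)) (hg : Tendsto (‖g ·‖) l (𝓝 s)) :
    Tendsto (‖f ·‖) l (𝓝 s) := by
  have hdiff : Tendsto (fun k => ‖f k‖ - ‖g k‖) l (𝓝 0) :=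
    squeeze_zero_norm (fun k => (abs_norm_sub_norm_le (f k) (g k)).trans_eq (norm_sub_rev _ _))
      (by simpa using hgf.norm)
  simpa using hdiff.add hg

theorem le_mul_of_tendsto_of_semimonotone {X : Type*} [SeminormedAddCommGroup X] [Preorder X]
    [AddLeftMono X] [l.NeBot] {M r s : ℝ} (hsemi : ∀ x y : X, 0 ≤ y → y ≤ x → ‖y‖ ≤ M * ‖x‖)
    {κ ξ ξ' δ : α → X} (hξ' : ∀ᶠ k in l, 0 ≤ ξ' k) (hδ : ∀ᶠ k in l, 0 ≤ δ k)
    (hξξ' : Tendsto (ξ - ξ') l (𝓝 0)) (hκξδ : Tendsto (κ - ξ - δ) l (𝓝 0))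
    (hs : Tendsto (‖ξ ·‖) l (𝓝 s)) (hr : Tendsto (‖κ ·‖) l (𝓝 r)) : s ≤ M * r := by
  have hκ : Tendsto (κ - (ξ' + δ)) l (𝓝 0) := by
    convert hκξδ.add hξξ' using 1
    · ext k; simp only [Pi.sub_apply, Pi.add_apply]; abel
    · simp
  refine le_of_tendsto_of_tendsto (tendsto_norm_of_tendsto_sub_nhds_zero hξξ' hs)
    ((tendsto_norm_of_tendsto_sub_nhds_zero hκ hr).const_mul M) ?_
  filter_upwards [hξ', hδ] with k hξ'k hδk
  exact hsemi _ _ hξ'k (le_add_of_nonneg_right hδk)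

end Limits

section Saturation

variable {l : Filter ℕ}

theorem exists_forall_eventually_of_forall_exists_eventually {β : Type*} (hl : l ≤ atTop)
    (Q : ℕ → ℕ → β → Prop) (h : ∀ n, ∃ x : ℕ → β, ∀ᶠ k in l, ∀ j ≤ n, Q j k (x k)) :
    ∃ g : ℕ → β, ∀ j, ∀ᶠ k in l, Q j k (g k) := by
  classical
  choose x hx using h
  -- at index `k`, use the largest `n ≤ k` such that `x n` meets the first `n` conditions at `k`
  let P (k n : ℕ) : Prop := ∀ j ≤ n, Q j k (x n k)
  refine ⟨fun k => x (Nat.findGreatest (P k) k) k, fun j => ?_⟩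
  filter_upwards [hl (eventually_ge_atTop j), hx j] with k hjk hk
  exact Nat.findGreatest_spec (P := P k) hjk hk j (Nat.le_findGreatest hjk hk)

theorem exists_eventually_norm_sub_le_of_cauchy {E : Type*} [SeminormedAddCommGroup E]
    (hl : l ≤ atTop) (f : ℕ → ℕ → E)
    (hf : ∀ ε > 0, ∃ N, ∀ m n, N ≤ m → N ≤ n → ∀ᶠ k in l, ‖f m k - f n k‖ ≤ ε) :
    ∃ g : ℕ → E, ∀ ε > 0, ∃ N, ∀ n, N ≤ n → ∀ᶠ k in l, ‖f n k - g k‖ ≤ ε := by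
  choose N hN using fun j : ℕ => hf (1 / (j + 1)) (by positivity)
  have hfinite : ∀ n, ∃ x : ℕ → E, ∀ᶠ k in l, ∀ j ≤ n, ‖f (N j) k - x k‖ ≤ 1 / (j + 1) :=
    fun n => ⟨f ((Finset.Iic n).sup N), (Set.finite_Iic n).eventually_all.2 fun j hj =>
      hN j _ _ le_rfl (Finset.le_sup (Finset.mem_Iic.2 hj))⟩
  obtain ⟨g, hg⟩ := exists_forall_eventually_of_forall_exists_eventually hl
    (fun j k y => ‖f (N j) k - y‖ ≤ 1 / (j + 1)) hfinite
  refine ⟨g, fun ε hε => ?_⟩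
  obtain ⟨j, hj⟩ := exists_nat_one_div_lt (half_pos hε)
  refine ⟨N j, fun n hn => ?_⟩
  filter_upwards [hN j n (N j) hn le_rfl, hg j] with k hnj hjg
  calc ‖f n k - g k‖ ≤ ‖f n k - f (N j) k‖ + ‖f (N j) k - g k‖ :=
        norm_sub_le_norm_sub_add_norm_sub _ _ _
    _ ≤ ε := by linarith

end Saturation

theorem stmt19_general {X : Type}
    [NormedAddCommGroup X] [PartialOrder X] [CovariantClass X X (· + ·) (· ≤ ·)]
    (M : ℝ)
    (hsemi : ∀ x y : X, 0 ≤ y → y ≤ x → ‖y‖ ≤ M * ‖x‖) :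
    let nstar : (γ* X) → (γ* ℝ) := Germ.map (fun x : X => ‖x‖)
    let fin : Set (γ* X) := {κ | ∃ r : ℝ, nstar κ ≤ (↑r : γ* ℝ)}
    let mu : Set (γ* X) := {κ | ∀ r : ℝ, 0 < r → nstar κ ≤ (↑r : γ* ℝ)}
    -- semimonotonicity (normality) of the hull with the same constant `M`:
    (∀ κ ξ : γ* X, κ ∈ fin → ξ ∈ fin →
      (∃ ξ' : γ* X, 0 ≤ ξ' ∧ ξ - ξ' ∈ mu) →        -- `0 ≤ [ξ]`
      (∃ δ : γ* X, 0 ≤ δ ∧ (κ - ξ) - δ ∈ mu) →     -- `[ξ] ≤ [κ]`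
      ∀ r s : ℝ,
        (∀ ε : ℝ, 0 < ε → |nstar ξ - (↑s : γ* ℝ)| ≤ (↑ε : γ* ℝ)) →  -- `s = st ‖ξ‖`
        (∀ ε : ℝ, 0 < ε → |nstar κ - (↑r : γ* ℝ)| ≤ (↑ε : γ* ℝ)) →  -- `r = st ‖κ‖`
        s ≤ M * r) ∧
    -- the hull is a Banach space: every Cauchy sequence of classes converges:
    (∀ κ : ℕ → γ* X, (∀ n, κ n ∈ fin) →
      (∀ ε : ℝ, 0 < ε → ∃ N : ℕ, ∀ m n : ℕ, N ≤ m → N ≤ n →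
        nstar (κ m - κ n) ≤ (↑ε : γ* ℝ)) →
      ∃ l : γ* X, l ∈ fin ∧ ∀ ε : ℝ, 0 < ε → ∃ N : ℕ, ∀ n : ℕ, N ≤ n →
        nstar (κ n - l) ≤ (↑ε : γ* ℝ)) := by
  intro nstar fin mu
  refine ⟨?_, ?_⟩
  · rintro κ ξ - - ⟨ξ', hξ', hξξ'⟩ ⟨δ, hδ, hκξδ⟩ r s hs hr
    obtain ⟨κ, rfl⟩ := κ.exists_coe_eq
    obtain ⟨ξ, rfl⟩ := ξ.exists_coe_eq
    obtain ⟨ξ', rfl⟩ := ξ'.exists_coe_eq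
    obtain ⟨δ, rfl⟩ := δ.exists_coe_eq
    exact le_mul_of_tendsto_of_semimonotone hsemi hξ' hδ
      ((Germ.tendsto_nhds_zero_iff_forall_map_norm_le (ξ - ξ')).2 hξξ')
      ((Germ.tendsto_nhds_zero_iff_forall_map_norm_le (κ - ξ - δ)).2 hκξδ)
      ((Germ.tendsto_nhds_iff_forall_abs_sub_le _ s).2 hs)
      ((Germ.tendsto_nhds_iff_forall_abs_sub_le _ r).2 hr)
  · intro κ hfin hcauchy
    choose f hf using fun n => (κ n).exists_coe_eq
    obtain rfl : κ = fun n => ↑(f n) := funext fun n => (hf n).symm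
    have hl : ((hyperfilter ℕ : Ultrafilter ℕ) : Filter ℕ) ≤ atTop :=
      Nat.cofinite_eq_atTop ▸ hyperfilter_le_cofinite
    obtain ⟨g, hg⟩ := exists_eventually_norm_sub_le_of_cauchy hl f hcauchy
    obtain ⟨N, hN⟩ := hg 1 one_pos
    obtain ⟨r, hr⟩ := hfin N
    refine ⟨↑g, ⟨r + 1, ?_⟩, hg⟩
    filter_upwards [hr, hN N le_rfl] with k (hrk : ‖f N k‖ ≤ r) hNk
    show ‖g k‖ ≤ r + 1
    linarith [norm_le_norm_add_norm_sub (f N k) (g k)]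

/-- let `(X, ‖·‖)` be a normal (semimonotone with constant `M`) ordered
normed space with generating cone. Its nonstandard hull `X̂ = fin(*X)/μ(*X)` with the
induced order (`[κ] ≥ 0` iff `κ` is infinitely close to some `ξ ≥ 0`) and norm
`‖[x]‖ = st ‖x‖` is a normal ordered Banach space with the same constant `M`:
`0 ≤ [ξ] ≤ [κ]` implies `st ‖ξ‖ ≤ M · st ‖κ‖`, and the hull is norm complete
(stated on representatives). -/
theorem stmt19 {X : Type}
    [NormedAddCommGroup X] [PartialOrder X] [CovariantClass X X (· + ·) (· ≤ ·)]
    [NormedSpace ℝ X]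
    (hgen : ∀ x : X, ∃ u v : X, 0 ≤ u ∧ 0 ≤ v ∧ x = u - v)
    (M : ℝ) (hM : 0 ≤ M)
    (hsemi : ∀ x y : X, 0 ≤ y → y ≤ x → ‖y‖ ≤ M * ‖x‖) :
    let nstar : (γ* X) → (γ* ℝ) := Germ.map (fun x : X => ‖x‖)
    let fin : Set (γ* X) := {κ | ∃ r : ℝ, nstar κ ≤ (↑r : γ* ℝ)}
    let mu : Set (γ* X) := {κ | ∀ r : ℝ, 0 < r → nstar κ ≤ (↑r : γ* ℝ)}
    -- semimonotonicity (normality) of the hull with the same constant `M`: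
    (∀ κ ξ : γ* X, κ ∈ fin → ξ ∈ fin →
      (∃ ξ' : γ* X, 0 ≤ ξ' ∧ ξ - ξ' ∈ mu) →        -- `0 ≤ [ξ]`
      (∃ δ : γ* X, 0 ≤ δ ∧ (κ - ξ) - δ ∈ mu) →     -- `[ξ] ≤ [κ]`
      ∀ r s : ℝ,
        (∀ ε : ℝ, 0 < ε → |nstar ξ - (↑s : γ* ℝ)| ≤ (↑ε : γ* ℝ)) →  -- `s = st ‖ξ‖`
        (∀ ε : ℝ, 0 < ε → |nstar κ - (↑r : γ* ℝ)| ≤ (↑ε : γ* ℝ)) →  -- `r = st ‖κ‖`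
        s ≤ M * r) ∧
    -- the hull is a Banach space: every Cauchy sequence of classes converges:
    (∀ κ : ℕ → γ* X, (∀ n, κ n ∈ fin) →
      (∀ ε : ℝ, 0 < ε → ∃ N : ℕ, ∀ m n : ℕ, N ≤ m → N ≤ n →
        nstar (κ m - κ n) ≤ (↑ε : γ* ℝ)) →
      ∃ l : γ* X, l ∈ fin ∧ ∀ ε : ℝ, 0 < ε → ∃ N : ℕ, ∀ n : ℕ, N ≤ n →
        nstar (κ n - l) ≤ (↑ε : γ* ℝ)) :=
  stmt19_general M hsemi
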